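/- arXiv:2108.00967 — 8 statements merged into one kernel-verified Lean document; each statement's English description precedes it below -/
import Mathlib

section
/- e_Max-noncontextuality inequality: If a finite hypergraph admits no exact-one assignment (i.e., it is non-binary/contextual), then for every independent finset S of vertices, the number of hyperedge indices j such that e j contains at least one element of S is strictly less than l. (In the paper's notation, l_cM < l for every non-binary MMP hypergraph.) -/
/-- e_Max-noncontextuality inequality: if a finite hypergraph admits no exact-one
assignment (it is non-binary/contextual), then for every independent finset `S` of
vertices, the number of hyperedges containing at least one element of `S` is strictly
less than `l` (i.e. `l_cM < l`). -/
theorem eMax_noncontextuality {V : Type*} [Fintype V] [DecidableEq V] {l : ℕ}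
    (e : Fin l → Finset V)
    (hnb : ¬ ∃ f : V → Bool, ∀ j : Fin l, ((e j).filter (fun v => f v = true)).card = 1)
    (S : Finset V) (hS : ∀ j : Fin l, (e j ∩ S).card ≤ 1) :
    (Finset.univ.filter (fun j : Fin l => (e j ∩ S).Nonempty)).card < l := by
  have hle : (Finset.univ.filter (fun j : Fin l => (e j ∩ S).Nonempty)).card ≤ l := by
    simpa using Finset.card_filter_le Finset.univ (fun j : Fin l => (e j ∩ S).Nonempty)
  rcases lt_or_eq_of_le hle with h | h
  · exact h
  · exfalso
    apply hnb
    refine ⟨fun v => decide (v ∈ S), fun j => ?_⟩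
    have hfilter : (e j).filter (fun v => decide (v ∈ S) = true) = e j ∩ S := by
      ext v; simp [Finset.mem_inter]
    rw [hfilter]
    have huniv : (Finset.univ.filter (fun j : Fin l => (e j ∩ S).Nonempty)) = Finset.univ := by
      apply Finset.eq_univ_of_card
      simpa using h
    have hne : (e j ∩ S).Nonempty := by
      have := Finset.mem_filter.mp (huniv ▸ Finset.mem_univ j)
      exact this.2
    have h1 := Finset.card_pos.mpr hne
    have h2 := hS j
    omega
end

section
/- v-noncontextuality inequality: If a finite hypergraph admits no exact-one assignment (is non-binary/contextual), then for every independent finset S of vertices the multiplexed vertex count ∑_{v ∈ S} m(v) is strictly less than l. (In the paper's notation, HI^m_cM < HI_q = l for every non-binary MMP hypergraph.) -/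
/-- v-noncontextuality inequality: if a finite hypergraph admits no exact-one assignment
(is non-binary/contextual), then for every independent finset `S` of vertices the
multiplexed vertex count `∑_{v ∈ S} m(v)` is strictly less than `l`
(i.e. `HI^m_cM < HI_q = l`). -/
theorem v_noncontextuality {V : Type*} [Fintype V] [DecidableEq V] {l : ℕ}
    (e : Fin l → Finset V)
    (hnb : ¬ ∃ f : V → Bool, ∀ j : Fin l, ((e j).filter (fun v => f v = true)).card = 1)
    (S : Finset V) (hS : ∀ j : Fin l, (e j ∩ S).card ≤ 1) :
    (∑ v ∈ S, (Finset.univ.filter (fun j : Fin l => v ∈ e j)).card) < l := by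
  have hswap : (∑ v ∈ S, (Finset.univ.filter (fun j : Fin l => v ∈ e j)).card)
      = ∑ j : Fin l, (e j ∩ S).card := by
    simp only [Finset.card_eq_sum_ones]
    rw [Finset.sum_comm' (t' := Finset.univ)
      (s' := fun j => S.filter (fun v => v ∈ e j))]
    · refine Finset.sum_congr rfl fun j _ => ?_
      congr 1
      ext v
      simp [Finset.mem_filter, Finset.mem_inter, and_comm]
    · intro v j
      simp [Finset.mem_filter, and_comm]
  rw [hswap]
  have hle : ∑ j : Fin l, (e j ∩ S).card ≤ ∑ _j : Fin l, 1 :=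
    Finset.sum_le_sum fun j _ => hS j
  simp only [Finset.sum_const, Finset.card_univ, Fintype.card_fin, smul_eq_mul, mul_one] at hle
  rcases lt_or_eq_of_le hle with h | h
  · exact h
  · exfalso
    apply hnb
    refine ⟨fun v => decide (v ∈ S), fun j => ?_⟩
    have hall : ∀ j : Fin l, (e j ∩ S).card = 1 := by
      by_contra hc
      push_neg at hc
      obtain ⟨j0, hj0⟩ := hc
      have hlt : (e j0 ∩ S).card < 1 := lt_of_le_of_ne (hS j0) hj0
      have : ∑ j : Fin l, (e j ∩ S).card < ∑ _j : Fin l, 1 :=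
        Finset.sum_lt_sum (fun j _ => hS j) ⟨j0, Finset.mem_univ _, hlt⟩
      simp only [Finset.sum_const, Finset.card_univ, Fintype.card_fin, smul_eq_mul,
        mul_one] at this
      omega
    have : (e j).filter (fun v => decide (v ∈ S) = true) = e j ∩ S := by
      ext v; simp [Finset.mem_filter, Finset.mem_inter]
    rw [this]
    exact hall j
end

section
/- α_p*-noncontextuality inequality: If a finite hypergraph admits no exact-one assignment (is non-binary/contextual) and every vertex belongs to at least one hyperedge, then every independent finset S satisfies S.card < l; in particular the independence number α of the hypergraph is strictly smaller than the number of hyperedges l (α < α_p* = l). -/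
/-- α_p*-noncontextuality inequality: if a finite hypergraph admits no exact-one assignment
(is non-binary/contextual) and every vertex belongs to at least one hyperedge, then every
independent finset `S` satisfies `S.card < l`; in particular the independence number `α`
is strictly smaller than the number `l` of hyperedges (`α < α_p* = l`). -/
theorem alpha_p_noncontextuality {V : Type*} [Fintype V] [DecidableEq V] {l : ℕ}
    (e : Fin l → Finset V)
    (hnb : ¬ ∃ f : V → Bool, ∀ j : Fin l, ((e j).filter (fun v => f v = true)).card = 1)
    (hcov : ∀ v : V, ∃ j : Fin l, v ∈ e j)
    (S : Finset V) (hS : ∀ j : Fin l, (e j ∩ S).card ≤ 1) :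
    S.card < l := by
  by_contra h
  push_neg at h
  choose g hg using hcov
  have hinj : Set.InjOn g S := by
    intro a ha b hb hab
    by_contra hne
    have h2 : 2 ≤ (e (g a) ∩ S).card := by
      refine Finset.one_lt_card.mpr ⟨a, ?_, b, ?_, hne⟩
      · exact Finset.mem_inter.mpr ⟨hg a, ha⟩
      · exact Finset.mem_inter.mpr ⟨hab ▸ hg b, hb⟩
    have := hS (g a)
    omega
  have hle : S.card ≤ l := by
    have := Finset.card_le_card_of_injOn g (fun a _ => Finset.mem_univ (g a)) hinj
    simpa using this
  have heq : S.card = l := le_antisymm hle h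
  have hsurj : ∀ j : Fin l, ∃ s ∈ S, g s = j := by
    have himg : (S.image g).card = l := by
      rw [Finset.card_image_of_injOn hinj, heq]
    have huniv : S.image g = Finset.univ :=
      Finset.eq_univ_of_card _ (by simp [himg])
    intro j
    have : j ∈ S.image g := huniv ▸ Finset.mem_univ j
    simpa [Finset.mem_image] using this
  apply hnb
  refine ⟨fun v => decide (v ∈ S), fun j => ?_⟩
  have h1 : (e j ∩ S).card = 1 := by
    obtain ⟨s, hsS, hgs⟩ := hsurj j
    have hmem : s ∈ e j ∩ S := Finset.mem_inter.mpr ⟨hgs ▸ hg s, hsS⟩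
    have := Finset.card_pos.mpr ⟨s, hmem⟩
    have := hS j
    omega
  have hfe : (e j).filter (fun v => decide (v ∈ S) = true) = e j ∩ S := by
    ext v; simp [Finset.mem_inter]
  rw [hfe, h1]
end

section
/- Parity bound on classical ±1 valuations: Let V be a finite type and e : Fin l → Finset V a hypergraph such that l is odd and every vertex has even multiplicity. Then for every function a : V → ℤ with a v = 1 or a v = −1 for all v, one has ∑_{j : Fin l} ( − ∏_{v ∈ e j} a v ) ≤ l − 2. (This is the classical bound P_c ≤ l − 2 underlying the operator noncontextuality inequalities of Cabello and of Badziąg–Bengtsson–Cabello–Pitowsky for KS sets with parity proofs.) -/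
/-- Parity bound on classical ±1 valuations: if `l` is odd and every vertex has even
multiplicity, then for every `a : V → ℤ` taking values `±1`,
`∑_j (−∏_{v ∈ e j} a v) ≤ l − 2` (the classical bound `P_c ≤ l − 2`). -/
theorem parity_classical_bound {V : Type*} [Fintype V] [DecidableEq V] {l : ℕ}
    (e : Fin l → Finset V) (hl : Odd l)
    (hm : ∀ v : V, Even (Finset.univ.filter (fun j : Fin l => v ∈ e j)).card)
    (a : V → ℤ) (ha : ∀ v : V, a v = 1 ∨ a v = -1) :
    (∑ j : Fin l, -(∏ v ∈ e j, a v)) ≤ (l : ℤ) - 2 := by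
  set P : Fin l → ℤ := fun j => ∏ v ∈ e j, a v with hP
  have hsq : ∀ v, a v * a v = 1 := by
    intro v; rcases ha v with h | h <;> rw [h] <;> ring
  have hPpm : ∀ j, P j = 1 ∨ P j = -1 := by
    intro j
    rw [← mul_self_eq_one_iff]
    simp only [hP, ← Finset.prod_mul_distrib]
    exact Finset.prod_eq_one fun v _ => hsq v
  have hprod : ∏ j : Fin l, P j = 1 := by
    have : ∏ j : Fin l, P j = ∏ v : V, a v ^ (Finset.univ.filter (fun j : Fin l => v ∈ e j)).card := by
      simp only [hP]
      rw [Finset.prod_comm' (s := Finset.univ) (t := fun j => e j)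
        (t' := Finset.univ) (s' := fun v => Finset.univ.filter (fun j : Fin l => v ∈ e j))]
      · simp [Finset.prod_const]
      · intro j v; simp
    rw [this]
    apply Finset.prod_eq_one
    intro v _
    obtain ⟨k, hk⟩ := hm v
    rw [hk, ← two_mul, pow_mul]
    have : a v ^ 2 = 1 := by rw [sq]; exact hsq v
    rw [this, one_pow]
  have hne : ¬ ∀ j, P j = -1 := by
    intro h
    rw [Finset.prod_congr rfl (fun j _ => h j), Finset.prod_const, Finset.card_univ,
      Fintype.card_fin, hl.neg_one_pow] at hprod
    norm_num at hprod
  push_neg at hne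
  obtain ⟨j0, hj0⟩ := hne
  have hj0' : P j0 = 1 := (hPpm j0).resolve_right hj0
  have hb : ∀ j ∈ Finset.univ, -(P j) ≤ (if j = j0 then (-2 : ℤ) else 0) + 1 := by
    intro j _
    by_cases h : j = j0
    · simp [h, hj0']
    · simp only [h, if_false, zero_add]
      rcases hPpm j with h1 | h1 <;> rw [h1] <;> norm_num
  calc (∑ j : Fin l, -(P j)) ≤ ∑ j : Fin l, ((if j = j0 then (-2 : ℤ) else 0) + 1) :=
        Finset.sum_le_sum hb
    _ = (l : ℤ) - 2 := by
        rw [Finset.sum_add_distrib, Finset.sum_ite_eq' Finset.univ j0 (fun _ => (-2 : ℤ))]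
        simp [Finset.card_univ]
        ring
end

section
/- The 18-9 hypergraph is a Kochen–Specker (non-binary) hypergraph: there is no function f : Fin 18 → Bool (using vertex labels 1,…,18) such that each of the nine 4-element hyperedges {1,2,3,4}, {4,5,6,7}, {7,8,9,10}, {10,11,12,13}, {13,14,15,16}, {16,17,18,1}, {3,5,12,14}, {2,9,11,18}, {6,8,15,17} contains exactly one vertex v with f v = true. -/
/-- The nine 4-element hyperedges of the 18-9 Kochen–Specker hypergraph on `Fin 18`
(vertex labels 1,…,18 represented by 0,…,17). -/
def e189 : Fin 9 → Finset (Fin 18) :=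
  ![{0, 1, 2, 3}, {3, 4, 5, 6}, {6, 7, 8, 9}, {9, 10, 11, 12}, {12, 13, 14, 15},
    {15, 16, 17, 0}, {2, 4, 11, 13}, {1, 8, 10, 17}, {5, 7, 14, 16}]

/-- The 18-9 hypergraph is a Kochen–Specker (non-binary) hypergraph: no assignment
`f : Fin 18 → Bool` gives exactly one `true` vertex in each of the nine hyperedges. -/
theorem eighteen_nine_is_KS :
    ¬ ∃ f : Fin 18 → Bool,
      ∀ j : Fin 9, ((e189 j).filter (fun v => f v = true)).card = 1 := by
  rintro ⟨f, hf⟩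
  have key : ∀ j : Fin 9, ∑ v ∈ e189 j, (f v).toNat = 1 := by
    intro j
    have h := hf j
    rw [Finset.card_filter] at h
    calc ∑ v ∈ e189 j, (f v).toNat
        = ∑ v ∈ e189 j, (if f v = true then 1 else 0) :=
          Finset.sum_congr rfl (fun v _ => by cases f v <;> rfl)
      _ = 1 := h
  have h0 := key 0; have h1 := key 1; have h2 := key 2; have h3 := key 3
  have h4 := key 4; have h5 := key 5; have h6 := key 6; have h7 := key 7
  have h8 := key 8
  rw [show e189 0 = ({0,1,2,3} : Finset (Fin 18)) from rfl] at h0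
  rw [show e189 1 = ({3,4,5,6} : Finset (Fin 18)) from rfl] at h1
  rw [show e189 2 = ({6,7,8,9} : Finset (Fin 18)) from rfl] at h2
  rw [show e189 3 = ({9,10,11,12} : Finset (Fin 18)) from rfl] at h3
  rw [show e189 4 = ({12,13,14,15} : Finset (Fin 18)) from rfl] at h4
  rw [show e189 5 = ({15,16,17,0} : Finset (Fin 18)) from rfl] at h5
  rw [show e189 6 = ({2,4,11,13} : Finset (Fin 18)) from rfl] at h6
  rw [show e189 7 = ({1,8,10,17} : Finset (Fin 18)) from rfl] at h7
  rw [show e189 8 = ({5,7,14,16} : Finset (Fin 18)) from rfl] at h8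
  simp (config := { decide := true }) only [Finset.sum_insert, Finset.sum_singleton,
    Finset.mem_insert, Finset.mem_singleton] at h0 h1 h2 h3 h4 h5 h6 h7 h8
  have hb : ∀ i : Fin 18, (f i).toNat ≤ 1 := fun i => by cases f i <;> simp
  have b0 := hb 0; have b1 := hb 1; have b2 := hb 2; have b3 := hb 3
  have b4 := hb 4; have b5 := hb 5; have b6 := hb 6; have b7 := hb 7
  have b8 := hb 8; have b9 := hb 9; have b10 := hb 10; have b11 := hb 11
  have b12 := hb 12; have b13 := hb 13; have b14 := hb 14; have b15 := hb 15
  have b16 := hb 16; have b17 := hb 17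
  omega
end

section
/- Badziąg–Bengtsson–Cabello–Pitowsky operator identity β_q = n − 2 per orthonormal basis: Let n ≥ 1 and let v : Fin n → (Fin n → ℂ) be an orthonormal family (∑_k conj (v i k) · v j k equals 1 if i = j and 0 otherwise). For each i let P i be the rank-one projection matrix with entries (P i) a b = v i a · conj (v i b), and set A i = 1 − 2 • P i. Then ∑_{i : Fin n} A i − ∏_{i : Fin n} (1 + A i) = ((n : ℂ) − 2) • 1 as n×n complex matrices. -/
open Matrix

/-- Badziąg–Bengtsson–Cabello–Pitowsky operator identity `β_q = n − 2` per orthonormal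
basis: for an orthonormal family `v : Fin n → (Fin n → ℂ)` and `A i = 1 − 2 • P i` built
from the rank-one projections `P i`, one has
`∑ i, A i − ∏ i, (1 + A i) = (n − 2) • 1`. -/
theorem bbcp_operator_identity {n : ℕ} (hn : 1 ≤ n) (v : Fin n → Fin n → ℂ)
    (horth : ∀ i j : Fin n,
      (∑ k : Fin n, (starRingEnd ℂ) (v i k) * v j k) = if i = j then 1 else 0)
    (P : Fin n → Matrix (Fin n) (Fin n) ℂ)
    (hP : ∀ i a b, P i a b = v i a * (starRingEnd ℂ) (v i b))
    (A : Fin n → Matrix (Fin n) (Fin n) ℂ)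
    (hA : ∀ i, A i = 1 - 2 • P i) :
    (∑ i : Fin n, A i) - (List.ofFn (fun i => 1 + A i)).prod =
      ((n : ℂ) - 2) • (1 : Matrix (Fin n) (Fin n) ℂ) := by
  have htwo : ∀ X : Matrix (Fin n) (Fin n) ℂ, (2:ℕ) • X = (2:ℂ) • X := by
    intro X
    rw [← Nat.cast_smul_eq_nsmul ℂ]
    norm_num
  -- orthogonality of the projections
  have hPP : ∀ i j : Fin n, i ≠ j → P i * P j = 0 := by
    intro i j hij
    ext a b
    simp only [Matrix.mul_apply, hP, Matrix.zero_apply]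
    have : ∑ k : Fin n, v i a * (starRingEnd ℂ) (v i k) * (v j k * (starRingEnd ℂ) (v j b))
        = (v i a * (starRingEnd ℂ) (v j b)) * ∑ k : Fin n, (starRingEnd ℂ) (v i k) * v j k := by
      rw [Finset.mul_sum]; congr 1; ext k; ring
    rw [this, horth, if_neg hij, mul_zero]
  -- completeness: ∑ P i = 1
  have hsum : ∑ i : Fin n, P i = 1 := by
    set M : Matrix (Fin n) (Fin n) ℂ := Matrix.of (fun i k => v i k) with hM
    have h1 : M * Mᴴ = 1 := by
      ext i j
      simp only [Matrix.mul_apply, Matrix.conjTranspose_apply, hM, Matrix.of_apply,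
        Matrix.one_apply]
      have h2 : ∑ k : Fin n, v i k * star (v j k)
          = star (∑ k : Fin n, (starRingEnd ℂ) (v i k) * v j k) := by
        rw [star_sum]; congr 1; ext k
        simp [mul_comm]
      rw [h2, horth i j]
      by_cases h : i = j <;> simp [h]
    have h2 : Mᴴ * M = 1 := mul_eq_one_comm.mp h1
    ext a b
    have h3 := congrArg (fun X => X b a) h2
    simp only [Matrix.mul_apply, Matrix.conjTranspose_apply, hM, Matrix.of_apply,
      Matrix.one_apply] at h3
    simp only [Matrix.sum_apply, hP, Matrix.one_apply]
    calc ∑ i : Fin n, v i a * (starRingEnd ℂ) (v i b)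
        = ∑ i : Fin n, star (v i b) * v i a := by
          congr 1; ext i; rw [mul_comm]; rfl
      _ = if b = a then 1 else 0 := h3
      _ = if a = b then 1 else 0 := by simp [eq_comm]
  -- killing P a against sums of other projections
  have hPl : ∀ (a : Fin n) (m : List (Fin n)), a ∉ m → P a * (m.map P).sum = 0 := by
    intro a m hm
    induction m with
    | nil => simp
    | cons b t ih =>
      simp only [List.mem_cons, not_or] at hm
      simp only [List.map_cons, List.sum_cons, mul_add]
      rw [hPP a b hm.1, ih hm.2, add_zero]
  -- the product telescopes
  have key : ∀ l : List (Fin n), l.Nodup →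
      (l.map (fun i => 1 + A i)).prod
        = ((2:ℂ)^l.length) • ((1 : Matrix (Fin n) (Fin n) ℂ) - (l.map P).sum) := by
    intro l hl
    induction l with
    | nil => simp
    | cons a l ih =>
      rcases List.nodup_cons.mp hl with ⟨ha, hl'⟩
      have hfact : (1 : Matrix (Fin n) (Fin n) ℂ) + A a = (2:ℂ) • (1 - P a) := by
        rw [hA, htwo]
        module
      rw [List.map_cons, List.prod_cons, ih hl', hfact, List.map_cons, List.sum_cons,
        List.length_cons, smul_mul_assoc, mul_smul_comm, smul_smul]
      have hmul : ((1 : Matrix (Fin n) (Fin n) ℂ) - P a) * (1 - (l.map P).sum)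
          = 1 - (P a + (l.map P).sum) := by
        rw [sub_mul, one_mul, mul_sub, mul_one, hPl a l ha]
        abel
      rw [hmul, pow_succ]
      ring_nf
  have hprod : (List.ofFn (fun i => 1 + A i)).prod = 0 := by
    rw [List.ofFn_eq_map, key _ (List.nodup_finRange n)]
    have : ((List.finRange n).map P).sum = ∑ i : Fin n, P i := (Fin.sum_univ_def P).symm
    rw [this, hsum, sub_self, smul_zero]
  rw [hprod, sub_zero]
  have hAsum : ∑ i : Fin n, A i = (n : ℂ) • (1 : Matrix (Fin n) (Fin n) ℂ) - (2:ℂ) • 1 := by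
    have h2 : ∀ i, A i = 1 - (2:ℂ) • P i := by
      intro i; rw [hA i, htwo]
    simp only [h2]
    rw [Finset.sum_sub_distrib, ← Finset.smul_sum, hsum, Finset.sum_const,
      Finset.card_univ, Fintype.card_fin, ← Nat.cast_smul_eq_nsmul ℂ]
  rw [hAsum, sub_smul]
end

section
/- No joint ±1 eigenvector for the Peres–Mermin operators: there do not exist a nonzero vector ψ : Fin 2 × Fin 2 → ℂ and a sign function ε : Fin 9 → ℤ with ε i = 1 or ε i = −1 for all i, such that (Σ i).mulVec ψ = (ε i : ℂ) • ψ for every i ∈ Fin 9 (where Σ 0 = Σ1, …, Σ 8 = Σ9). Hence no quantum state Ψ satisfies Σ_j Ψ = ±Ψ simultaneously for all nine Peres–Mermin operators. -/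
open Matrix Kronecker Complex

/-- The Pauli matrix σx. -/
def sigmaX : Matrix (Fin 2) (Fin 2) ℂ := !![0, 1; 1, 0]
/-- The Pauli matrix σy. -/
def sigmaY : Matrix (Fin 2) (Fin 2) ℂ := !![0, -I; I, 0]
/-- The Pauli matrix σz. -/
def sigmaZ : Matrix (Fin 2) (Fin 2) ℂ := !![1, 0; 0, -1]

/-- The nine Peres–Mermin operators `Σ1, …, Σ9`, as a family indexed by `Fin 9`. -/
def SigPM : Fin 9 → Matrix (Fin 2 × Fin 2) (Fin 2 × Fin 2) ℂ :=
  ![sigmaZ ⊗ₖ 1, 1 ⊗ₖ sigmaZ, sigmaZ ⊗ₖ sigmaZ,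
    1 ⊗ₖ sigmaX, sigmaX ⊗ₖ 1, sigmaX ⊗ₖ sigmaX,
    sigmaZ ⊗ₖ sigmaX, sigmaX ⊗ₖ sigmaZ, sigmaY ⊗ₖ sigmaY]

private lemma triple_eigen {M N P : Matrix (Fin 2 × Fin 2) (Fin 2 × Fin 2) ℂ}
    {ψ : Fin 2 × Fin 2 → ℂ} {a b c : ℂ}
    (hM : M.mulVec ψ = a • ψ) (hN : N.mulVec ψ = b • ψ) (hP : P.mulVec ψ = c • ψ) :
    (M * N * P).mulVec ψ = (a * b * c) • ψ := by
  rw [← Matrix.mulVec_mulVec, ← Matrix.mulVec_mulVec, hP, Matrix.mulVec_smul, hN,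
    smul_smul, Matrix.mulVec_smul, hM, smul_smul]
  ring_nf

private lemma row1 : SigPM 0 * SigPM 1 * SigPM 2 = 1 := by
  show (sigmaZ ⊗ₖ 1) * (1 ⊗ₖ sigmaZ) * (sigmaZ ⊗ₖ sigmaZ) = 1
  ext ⟨i,j⟩ ⟨k,l⟩
  fin_cases i <;> fin_cases j <;> fin_cases k <;> fin_cases l <;>
    simp [sigmaX, sigmaY, sigmaZ, Matrix.mul_apply, Fintype.sum_prod_type,
      Fin.sum_univ_succ, Matrix.one_apply, Prod.ext_iff, Complex.ext_iff]

private lemma row2 : SigPM 3 * SigPM 4 * SigPM 5 = 1 := by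
  show (1 ⊗ₖ sigmaX) * (sigmaX ⊗ₖ 1) * (sigmaX ⊗ₖ sigmaX) = 1
  ext ⟨i,j⟩ ⟨k,l⟩
  fin_cases i <;> fin_cases j <;> fin_cases k <;> fin_cases l <;>
    simp [sigmaX, sigmaY, sigmaZ, Matrix.mul_apply, Fintype.sum_prod_type,
      Fin.sum_univ_succ, Matrix.one_apply, Prod.ext_iff, Complex.ext_iff]

private lemma row3 : SigPM 6 * SigPM 7 * SigPM 8 = 1 := by
  show (sigmaZ ⊗ₖ sigmaX) * (sigmaX ⊗ₖ sigmaZ) * (sigmaY ⊗ₖ sigmaY) = 1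
  ext ⟨i,j⟩ ⟨k,l⟩
  fin_cases i <;> fin_cases j <;> fin_cases k <;> fin_cases l <;>
    simp [sigmaX, sigmaY, sigmaZ, Matrix.mul_apply, Fintype.sum_prod_type,
      Fin.sum_univ_succ, Matrix.one_apply, Prod.ext_iff, Complex.ext_iff]

private lemma col1 : SigPM 0 * SigPM 3 * SigPM 6 = 1 := by
  show (sigmaZ ⊗ₖ 1) * (1 ⊗ₖ sigmaX) * (sigmaZ ⊗ₖ sigmaX) = 1
  ext ⟨i,j⟩ ⟨k,l⟩
  fin_cases i <;> fin_cases j <;> fin_cases k <;> fin_cases l <;>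
    simp [sigmaX, sigmaY, sigmaZ, Matrix.mul_apply, Fintype.sum_prod_type,
      Fin.sum_univ_succ, Matrix.one_apply, Prod.ext_iff, Complex.ext_iff]

private lemma col2 : SigPM 1 * SigPM 4 * SigPM 7 = 1 := by
  show (1 ⊗ₖ sigmaZ) * (sigmaX ⊗ₖ 1) * (sigmaX ⊗ₖ sigmaZ) = 1
  ext ⟨i,j⟩ ⟨k,l⟩
  fin_cases i <;> fin_cases j <;> fin_cases k <;> fin_cases l <;>
    simp [sigmaX, sigmaY, sigmaZ, Matrix.mul_apply, Fintype.sum_prod_type,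
      Fin.sum_univ_succ, Matrix.one_apply, Prod.ext_iff, Complex.ext_iff]

private lemma col3 : SigPM 2 * SigPM 5 * SigPM 8 = -1 := by
  show (sigmaZ ⊗ₖ sigmaZ) * (sigmaX ⊗ₖ sigmaX) * (sigmaY ⊗ₖ sigmaY) = -1
  ext ⟨i,j⟩ ⟨k,l⟩
  fin_cases i <;> fin_cases j <;> fin_cases k <;> fin_cases l <;>
    simp [sigmaX, sigmaY, sigmaZ, Matrix.mul_apply, Fintype.sum_prod_type,
      Fin.sum_univ_succ, Matrix.one_apply, Prod.ext_iff, Complex.ext_iff]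

/-- No joint ±1 eigenvector for the Peres–Mermin operators: there is no nonzero vector
`ψ` and sign function `ε : Fin 9 → ℤ` with values `±1` such that
`Σ_i ψ = ε_i ψ` for every `i`. -/
theorem peres_mermin_no_joint_eigenvector :
    ¬ ∃ (ψ : Fin 2 × Fin 2 → ℂ) (ε : Fin 9 → ℤ),
      ψ ≠ 0 ∧ (∀ i, ε i = 1 ∨ ε i = -1) ∧
      ∀ i : Fin 9, (SigPM i).mulVec ψ = (ε i : ℂ) • ψ := by
  rintro ⟨ψ, ε, hψ, -, hev⟩
  obtain ⟨x, hx⟩ : ∃ x, ψ x ≠ 0 := by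
    by_contra h
    push_neg at h
    exact hψ (funext h)
  set a : Fin 9 → ℂ := fun i => (ε i : ℂ) with ha
  have key1 : ∀ i j k : Fin 9, SigPM i * SigPM j * SigPM k = 1 →
      a i * a j * a k = 1 := by
    intro i j k hprod
    have h := triple_eigen (hev i) (hev j) (hev k)
    rw [hprod, Matrix.one_mulVec] at h
    have h1 := congrFun h x
    simp only [Pi.smul_apply, smul_eq_mul] at h1
    have h2 : (a i * a j * a k - 1) * ψ x = 0 := by
      simp only [ha]; linear_combination -h1
    rcases mul_eq_zero.mp h2 with h' | h'
    · exact sub_eq_zero.mp h'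
    · exact absurd h' hx
  have key3 : a 2 * a 5 * a 8 = -1 := by
    have h := triple_eigen (hev 2) (hev 5) (hev 8)
    rw [col3] at h
    have h1 := congrFun h x
    simp only [Matrix.neg_mulVec, Matrix.one_mulVec, Pi.neg_apply, Pi.smul_apply,
      smul_eq_mul] at h1
    have h2 : (a 2 * a 5 * a 8 + 1) * ψ x = 0 := by
      simp only [ha]; linear_combination -h1
    rcases mul_eq_zero.mp h2 with h' | h'
    · exact eq_neg_of_add_eq_zero_left h'
    · exact absurd h' hx
  have hr1 := key1 0 1 2 row1
  have hr2 := key1 3 4 5 row2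
  have hr3 := key1 6 7 8 row3
  have hc1 := key1 0 3 6 col1
  have hc2 := key1 1 4 7 col2
  have hcontra : (1 : ℂ) = -1 := by
    calc (1:ℂ) = (a 0 * a 1 * a 2) * (a 3 * a 4 * a 5) * (a 6 * a 7 * a 8) := by
          rw [hr1, hr2, hr3]; ring
      _ = (a 0 * a 3 * a 6) * (a 1 * a 4 * a 7) * (a 2 * a 5 * a 8) := by ring
      _ = -1 := by rw [hc1, hc2, key3]; ring
  norm_num at hcontra
end

section
/- KCBS quantum value √5 for the pentagon: there exist vectors v : ZMod 5 → EuclideanSpace ℝ (Fin 3) with ‖v i‖ = 1 for all i and ⟪v i, v (i+1)⟫ = 0 for all i (cyclic orthogonality of consecutive pentagon vectors), together with a vector ψ ∈ EuclideanSpace ℝ (Fin 3) with ‖ψ‖ = 1, such that ∑_{i : ZMod 5} ⟪v i, ψ⟫² = Real.sqrt 5. Thus the quantum mean value ⟨A_q⟩_Ψ = √5 ≈ 2.236 exceeds the classical bound 2 of the pentagon. -/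
open RealInnerProductSpace

noncomputable def kA : ℝ := Real.sqrt 5
noncomputable def ks : ℝ := Real.sqrt (1 - kA / 5)
noncomputable def kp : ℝ := Real.sqrt (10 - 2 * kA) / 4
noncomputable def kq : ℝ := Real.sqrt (10 + 2 * kA) / 4
noncomputable def kc : ℝ := Real.sqrt (kA / 5)

noncomputable def kvv (a b : ℝ) : EuclideanSpace ℝ (Fin 3) :=
  (WithLp.equiv 2 _).symm ![a, b, kc]

lemma khA2 : kA ^ 2 = 5 := Real.sq_sqrt (by norm_num)
lemma khA0 : 0 ≤ kA := Real.sqrt_nonneg 5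
lemma khA5 : kA ≤ 5 := by nlinarith [khA2, khA0]
lemma khc2 : kc ^ 2 = kA / 5 := Real.sq_sqrt (div_nonneg khA0 (by norm_num))
lemma khs2 : ks ^ 2 = 1 - kA / 5 := Real.sq_sqrt (by nlinarith [khA5])
lemma khp2 : kp ^ 2 = (10 - 2 * kA) / 16 := by
  have : Real.sqrt (10 - 2 * kA) ^ 2 = 10 - 2 * kA := Real.sq_sqrt (by nlinarith [khA5])
  rw [kp, div_pow, this]; norm_num
lemma khq2 : kq ^ 2 = (10 + 2 * kA) / 16 := by
  have : Real.sqrt (10 + 2 * kA) ^ 2 = 10 + 2 * kA := Real.sq_sqrt (by nlinarith [khA0])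
  rw [kq, div_pow, this]; norm_num
lemma khpq : kp * kq = kA / 4 := by
  rw [kp, kq, div_mul_div_comm, ← Real.sqrt_mul (by nlinarith [khA5])]
  have h1 : (10 - 2 * kA) * (10 + 2 * kA) = (4 * kA) ^ 2 := by nlinarith [khA2]
  rw [h1, Real.sqrt_sq (by linarith [khA0])]; ring

lemma inner_kvv (a b c d : ℝ) : ⟪kvv a b, kvv c d⟫ = a * c + b * d + kA / 5 := by
  simp [kvv, PiLp.inner_apply, Fin.sum_univ_three]
  nlinarith [khc2]

lemma norm_kvv (a b : ℝ) (h : a ^ 2 + b ^ 2 + kA / 5 = 1) : ‖kvv a b‖ = 1 := by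
  rw [EuclideanSpace.norm_eq]
  have : (∑ i : Fin 3, ‖kvv a b i‖ ^ 2) = a ^ 2 + b ^ 2 + kA / 5 := by
    simp [kvv, Fin.sum_univ_three, sq_abs]
    nlinarith [khc2]
  rw [this, h, Real.sqrt_one]

/-- KCBS quantum value √5 for the pentagon: there exist five unit vectors in ℝ³, indexed
cyclically by `ZMod 5` with consecutive vectors orthogonal, and a unit state `ψ`, such
that the sum of squared projections `∑ i, ⟪v i, ψ⟫²` equals `√5`, exceeding the classical
bound 2 of the pentagon. -/
theorem kcbs_quantum_value_sqrt5 :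
    ∃ (v : ZMod 5 → EuclideanSpace ℝ (Fin 3)) (ψ : EuclideanSpace ℝ (Fin 3)),
      (∀ i : ZMod 5, ‖v i‖ = 1) ∧
      (∀ i : ZMod 5, ⟪v i, v (i + 1)⟫ = 0) ∧
      ‖ψ‖ = 1 ∧
      (∑ i : ZMod 5, ⟪v i, ψ⟫ ^ 2) = Real.sqrt 5 := by
  set w : Fin 5 → EuclideanSpace ℝ (Fin 3) :=
    ![kvv ks 0,
      kvv (-ks * (1 + kA) / 4) (ks * kp),
      kvv (ks * (kA - 1) / 4) (-ks * kq),
      kvv (ks * (kA - 1) / 4) (ks * kq),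
      kvv (-ks * (1 + kA) / 4) (-ks * kp)] with hw
  refine ⟨fun i => w ⟨i.val, i.val_lt⟩, (WithLp.equiv 2 _).symm ![0, 0, 1], ?_, ?_, ?_, ?_⟩
  · intro i
    fin_cases i
    · exact norm_kvv _ _ (by linear_combination khs2)
    · exact norm_kvv _ _ (by linear_combination khs2 + (ks ^ 2 / 16) * khA2 + ks ^ 2 * khp2)
    · exact norm_kvv _ _ (by linear_combination khs2 + (ks ^ 2 / 16) * khA2 + ks ^ 2 * khq2)
    · exact norm_kvv _ _ (by linear_combination khs2 + (ks ^ 2 / 16) * khA2 + ks ^ 2 * khq2)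
    · exact norm_kvv _ _ (by linear_combination khs2 + (ks ^ 2 / 16) * khA2 + ks ^ 2 * khp2)
  · intro i
    fin_cases i
    · show ⟪kvv ks 0, kvv (-ks * (1 + kA) / 4) (ks * kp)⟫ = 0
      rw [inner_kvv]
      linear_combination (-(1 + kA) / 4) * khs2 + (1 / 20) * khA2
    · show ⟪kvv (-ks * (1 + kA) / 4) (ks * kp), kvv (ks * (kA - 1) / 4) (-ks * kq)⟫ = 0
      rw [inner_kvv]
      linear_combination (-(1 + kA) / 4) * khs2 + (1 / 20 - ks ^ 2 / 16) * khA2 + (-ks ^ 2) * khpq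
    · show ⟪kvv (ks * (kA - 1) / 4) (-ks * kq), kvv (ks * (kA - 1) / 4) (ks * kq)⟫ = 0
      rw [inner_kvv]
      linear_combination (-(1 + kA) / 4) * khs2 + (1 / 20 + ks ^ 2 / 16) * khA2 + (-ks ^ 2) * khq2
    · show ⟪kvv (ks * (kA - 1) / 4) (ks * kq), kvv (-ks * (1 + kA) / 4) (-ks * kp)⟫ = 0
      rw [inner_kvv]
      linear_combination (-(1 + kA) / 4) * khs2 + (1 / 20 - ks ^ 2 / 16) * khA2 + (-ks ^ 2) * khpq
    · show ⟪kvv (-ks * (1 + kA) / 4) (-ks * kp), kvv ks 0⟫ = 0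
      rw [inner_kvv]
      linear_combination (-(1 + kA) / 4) * khs2 + (1 / 20) * khA2
  · rw [EuclideanSpace.norm_eq]
    have : (∑ i : Fin 3, ‖((WithLp.equiv 2 (Fin 3 → ℝ)).symm ![0, 0, 1] : EuclideanSpace ℝ (Fin 3)) i‖ ^ 2) = 1 := by
      simp [Fin.sum_univ_three]
    rw [this, Real.sqrt_one]
  · have key : ∀ a b : ℝ, ⟪kvv a b, ((WithLp.equiv 2 (Fin 3 → ℝ)).symm ![0, 0, 1] : EuclideanSpace ℝ (Fin 3))⟫ ^ 2 = kA / 5 := by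
      intro a b
      have : ⟪kvv a b, ((WithLp.equiv 2 (Fin 3 → ℝ)).symm ![0, 0, 1] : EuclideanSpace ℝ (Fin 3))⟫ = kc := by
        simp [kvv, PiLp.inner_apply, Fin.sum_univ_three]
      rw [this, khc2]
    rw [show (∑ i : ZMod 5, ⟪w ⟨i.val, i.val_lt⟩, ((WithLp.equiv 2 (Fin 3 → ℝ)).symm ![0, 0, 1] : EuclideanSpace ℝ (Fin 3))⟫ ^ 2) = ∑ i : Fin 5, ⟪w i, ((WithLp.equiv 2 (Fin 3 → ℝ)).symm ![0, 0, 1] : EuclideanSpace ℝ (Fin 3))⟫ ^ 2 from rfl]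
    rw [Fin.sum_univ_five]
    simp only [hw, Matrix.cons_val_zero, Matrix.cons_val_one, Matrix.head_cons,
      Matrix.cons_val_two, Matrix.cons_val_three, Matrix.cons_val_four, Matrix.tail_cons]
    rw [key, key, key, key, key]
    rw [kA]; ring_nf
end
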